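/- For every vertex i ∈ Q₀ and every arrow α starting at i (s(α) = i), the element z_i := x(α)·x(f(α))·x(f²(α)) satisfies z_i·x(β) = 0 and x(β)·z_i = 0 in A for every arrow β ∈ Q₁. -/

import Mathlib

/-!
Write `z = x α * x (f α) * x (f² α)` and `i = s α`. Each relation of the Jacobian algebra
rewrites `z` as a scalar times a full `g`-cycle through `i`: the relation at `α` gives the cycle
starting with `α`, the one at `f² α` the cycle ending with `f² α`. The two arrows leaving `i`
are `α` and `g (f² α)`, the two arrows entering `i` are `f² α` and `g⁻¹ α`, and
`f (g⁻¹ α) = g (f² α)`. So for each of these four arrows `β`, one of the three expressions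
for `z` puts `x β` next to two of its factors and a vanishing relation kills the product;
every other `β` is killed by the idempotents.
-/

/-- The product `x α * x (g α) * ⋯ * x (g^[m-1] α)` of `m` factors along the `g`-orbit,
read left to right (the empty product for `m = 0` is `1`). -/
def gpath {Q₁ A : Type} [Ring A] (x : Q₁ → A) (g : Q₁ → Q₁) (α : Q₁) (m : ℕ) : A :=
  ((List.range m).map fun i => x (g^[i] α)).prod

open Function Finset

section GPath

variable {Q₁ A : Type} [Ring A] (x : Q₁ → A) (g : Q₁ → Q₁)

lemma gpath_succ (δ : Q₁) (m : ℕ) : gpath x g δ (m + 1) = gpath x g δ m * x (g^[m] δ) := by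
  simp [gpath, List.range_succ]

lemma gpath_succ' (δ : Q₁) (m : ℕ) : gpath x g δ (m + 1) = x δ * gpath x g (g δ) m := by
  simp [gpath, List.range_succ_eq_map, Function.comp_def, Function.iterate_succ_apply]

end GPath

lemma two_le_minimalPeriod_of_injective {α : Type} [Finite α] {g : α → α}
    (hinj : Injective g) (hg : ∀ a, g a ≠ a) (a : α) : 2 ≤ minimalPeriod g a := by
  have hpos := minimalPeriod_pos_of_mem_periodicPts (hinj.mem_periodicPts a)
  have hne : minimalPeriod g a ≠ 1 := fun h => hg a (minimalPeriod_eq_one_iff_isFixedPt.mp h)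
  omega

lemma iterate_eq_self_of_minimalPeriod_eq {α : Type} {g : α → α} {a : α} {n : ℕ}
    (h : minimalPeriod g a = n) : g^[n] a = a :=
  h ▸ iterate_minimalPeriod

lemma eq_or_eq_of_card_filter_eq_two {α : Type} [Fintype α] {p : α → Prop} [DecidablePred p]
    (h : #(univ.filter p) = 2) {a b c : α} (hab : a ≠ b) (ha : p a) (hb : p b) (hc : p c) :
    c = a ∨ c = b := by
  classical
  obtain ⟨u, v, -, huv⟩ := card_eq_two.mp h
  have mem : ∀ y, p y → y = u ∨ y = v := fun y hy => by
    have : y ∈ ({u, v} : Finset α) := huv ▸ mem_filter.mpr ⟨mem_univ y, hy⟩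
    simpa using this
  rcases mem a ha with rfl | rfl <;> rcases mem b hb with rfl | rfl <;>
    rcases mem c hc with rfl | rfl <;> simp_all

section Arrows

variable {Q₀ Q₁ : Type} [Fintype Q₁] [DecidableEq Q₀] {s t : Q₁ → Q₀} {f g : Q₁ ≃ Q₁}

lemma eq_or_eq_of_source_eq (hout : ∀ v : Q₀, (univ.filter fun e => s e = v).card = 2)
    (hfg : ∀ α, f α ≠ g α) (hsf : ∀ α, s (f α) = t α) (hsg : ∀ α, s (g α) = t α)
    (hf3 : ∀ α, f (f (f α)) = α) {α ε : Q₁} (hε : s ε = s α) :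
    ε = α ∨ ε = g (f (f α)) := by
  have hne : α ≠ g (f (f α)) := fun h => hfg (f (f α)) (by rw [hf3, ← h])
  have hs : s (g (f (f α))) = s α := by rw [hsg, ← hsf, hf3]
  exact eq_or_eq_of_card_filter_eq_two (hout (s α)) hne rfl hs hε

lemma eq_or_eq_of_target_eq (hin : ∀ v : Q₀, (univ.filter fun e => t e = v).card = 2)
    (hfg : ∀ α, f α ≠ g α) (hsf : ∀ α, s (f α) = t α) (hsg : ∀ α, s (g α) = t α)
    (hf3 : ∀ α, f (f (f α)) = α) {α ε : Q₁} (hε : t ε = s α) :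
    ε = f (f α) ∨ ε = g.symm α := by
  have hne : f (f α) ≠ g.symm α := fun h =>
    hfg (f (f α)) (by rw [hf3, h, Equiv.apply_symm_apply])
  have ht₁ : t (f (f α)) = s α := by rw [← hsf, hf3]
  have ht₂ : t (g.symm α) = s α := by rw [← hsg, Equiv.apply_symm_apply]
  exact eq_or_eq_of_card_filter_eq_two (hin (s α)) hne ht₁ ht₂ hε

lemma f_g_symm_eq (hout : ∀ v : Q₀, (univ.filter fun e => s e = v).card = 2)
    (hfg : ∀ α, f α ≠ g α) (hsf : ∀ α, s (f α) = t α) (hsg : ∀ α, s (g α) = t α)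
    (hf3 : ∀ α, f (f (f α)) = α) (α : Q₁) : f (g.symm α) = g (f (f α)) := by
  have hs : s (f (g.symm α)) = s α := by rw [hsf, ← hsg, Equiv.apply_symm_apply]
  refine (eq_or_eq_of_source_eq hout hfg hsf hsg hf3 hs).resolve_left fun h => ?_
  exact hfg (g.symm α) (by rw [h, Equiv.apply_symm_apply])

end Arrows

section Annihilation

variable {Q₀ Q₁ K A : Type} [CommSemiring K] [Ring A] [Algebra K A] {s t : Q₁ → Q₀}
  {f g : Q₁ ≃ Q₁} {c : Q₁ → K} {x : Q₁ → A} {e : Q₀ → A}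

lemma mul_eq_zero_of_target_ne (horth : ∀ v w, v ≠ w → e v * e w = 0)
    (hes : ∀ α, e (s α) * x α = x α) (het : ∀ α, x α * e (t α) = x α) {β γ : Q₁}
    (h : t β ≠ s γ) : x β * x γ = 0 :=
  calc x β * x γ = x β * e (t β) * (e (s γ) * x γ) := by rw [het, hes]
    _ = x β * (e (t β) * e (s γ)) * x γ := by simp only [mul_assoc]
    _ = 0 := by rw [horth _ _ h, mul_zero, zero_mul]

lemma g_symm_mul_cycle_eq_zero (hvan : ∀ β, x β * x (g β) * x (f (g β)) = 0) (α : Q₁) :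
    x (g.symm α) * (x α * x (f α) * x (f (f α))) = 0 := by
  have h := hvan (g.symm α)
  rw [Equiv.apply_symm_apply] at h
  rw [← mul_assoc, ← mul_assoc, h, zero_mul]

variable [Finite Q₁]

lemma cycle_eq_smul_gpath
    (hrel : ∀ α, x (f α) * x (f (f α)) = c α • gpath x (⇑g) (g α) (minimalPeriod (⇑g) α - 1))
    (α : Q₁) :
    x α * x (f α) * x (f (f α)) = c α • gpath x (⇑g) α (minimalPeriod (⇑g) α) := by
  have hpos := minimalPeriod_pos_of_mem_periodicPts (g.injective.mem_periodicPts α)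
  obtain ⟨m, hm⟩ := Nat.exists_eq_add_of_le' hpos
  rw [mul_assoc, hrel, mul_smul_comm, hm, Nat.add_sub_cancel, gpath_succ']

lemma cycle_mul_self_eq_zero (hg : ∀ a, g a ≠ a) (hf3 : ∀ α, f (f (f α)) = α)
    (hrel : ∀ α, x (f α) * x (f (f α)) = c α • gpath x (⇑g) (g α) (minimalPeriod (⇑g) α - 1))
    (hvan : ∀ β, x β * x (g β) * x (f (g β)) = 0) (α : Q₁) :
    x α * x (f α) * x (f (f α)) * x α = 0 := by
  obtain ⟨m, hm⟩ : ∃ m, minimalPeriod (⇑g) (f (f α)) = m + 2 :=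
    Nat.exists_eq_add_of_le' (two_le_minimalPeriod_of_injective g.injective hg _)
  have hrel' := hrel (f (f α))
  rw [show minimalPeriod (⇑g) (f (f α)) - 1 = m + 1 by omega] at hrel'
  simp only [hf3] at hrel'
  set δ := (⇑g)^[m] (g (f (f α)))
  have hδ : g δ = f (f α) := by
    rw [← iterate_succ_apply' (⇑g) m, ← iterate_succ_apply]
    exact iterate_eq_self_of_minimalPeriod_eq hm
  have hvanδ := hvan δ
  rw [hδ, hf3] at hvanδ
  rw [hrel', gpath_succ, smul_mul_assoc, smul_mul_assoc]
  simp only [mul_assoc] at hvanδ ⊢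
  rw [hvanδ, mul_zero, smul_zero]

lemma cycle_mul_f_g_symm_eq_zero (hg : ∀ a, g a ≠ a)
    (hrel : ∀ α, x (f α) * x (f (f α)) = c α • gpath x (⇑g) (g α) (minimalPeriod (⇑g) α - 1))
    (hvan : ∀ β, x β * x (g β) * x (f (g β)) = 0) (α : Q₁) :
    x α * x (f α) * x (f (f α)) * x (f (g.symm α)) = 0 := by
  obtain ⟨m, hm⟩ : ∃ m, minimalPeriod (⇑g) α = m + 2 :=
    Nat.exists_eq_add_of_le' (two_le_minimalPeriod_of_injective g.injective hg _)
  have hlast : (⇑g)^[m + 1] α = g.symm α := by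
    rw [g.eq_symm_apply, ← iterate_succ_apply' (⇑g)]
    exact iterate_eq_self_of_minimalPeriod_eq hm
  have hvanm := hvan ((⇑g)^[m] α)
  rw [← iterate_succ_apply' (⇑g), hlast] at hvanm
  rw [cycle_eq_smul_gpath hrel, hm, gpath_succ, gpath_succ, hlast, smul_mul_assoc]
  simp only [mul_assoc] at hvanm ⊢
  rw [hvanm, mul_zero, smul_zero]

lemma f_f_mul_cycle_eq_zero (hg : ∀ a, g a ≠ a) (hf3 : ∀ α, f (f (f α)) = α)
    (hrel : ∀ α, x (f α) * x (f (f α)) = c α • gpath x (⇑g) (g α) (minimalPeriod (⇑g) α - 1))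
    (hvan : ∀ β, x β * x (f β) * x (g (f β)) = 0) (α : Q₁) :
    x (f (f α)) * (x α * x (f α) * x (f (f α))) = 0 := by
  obtain ⟨m, hm⟩ : ∃ m, minimalPeriod (⇑g) α = m + 2 :=
    Nat.exists_eq_add_of_le' (two_le_minimalPeriod_of_injective g.injective hg _)
  have hvanα := hvan (f (f α))
  rw [hf3] at hvanα
  rw [cycle_eq_smul_gpath hrel, hm, gpath_succ', gpath_succ', mul_smul_comm]
  simp only [← mul_assoc] at hvanα ⊢
  rw [hvanα, zero_mul, smul_zero]

end Annihilation

theorem stmt_17_general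
  {Q₀ Q₁ : Type} [Fintype Q₁] [DecidableEq Q₀]
  (s t : Q₁ → Q₀)
  (hnoloop : ∀ e : Q₁, s e ≠ t e)
  (hout : ∀ v : Q₀, (Finset.univ.filter fun e => s e = v).card = 2)
  (hin : ∀ v : Q₀, (Finset.univ.filter fun e => t e = v).card = 2)
  (f g : Q₁ ≃ Q₁)
  (hfg : ∀ α : Q₁, f α ≠ g α)
  (hsf : ∀ α : Q₁, s (f α) = t α)
  (hsg : ∀ α : Q₁, s (g α) = t α)
  (hf3 : ∀ α : Q₁, f (f (f α)) = α)
  {K : Type} [Field K] {A : Type} [Ring A] [Algebra K A]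
  (c : Q₁ → K)
  (x : Q₁ → A)
  (hrel : ∀ α : Q₁, x (f α) * x (f (f α)) =
      c α • gpath x (⇑g) (g α) (Function.minimalPeriod (⇑g) α - 1))
  (e : Q₀ → A)
  (horth : ∀ v w : Q₀, v ≠ w → e v * e w = 0)
  (hes : ∀ α : Q₁, e (s α) * x α = x α)
  (het : ∀ α : Q₁, x α * e (t α) = x α)
  (hvan : ∀ β : Q₁, x β * x (g β) * x (f (g β)) = 0 ∧ x β * x (f β) * x (g (f β)) = 0) :
    ∀ i : Q₀, ∀ α : Q₁, s α = i → ∀ β : Q₁,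
      (x α * x (f α) * x (f (f α))) * x β = 0 ∧
      x β * (x α * x (f α) * x (f (f α))) = 0 := by
  rintro _ α rfl β
  have hg : ∀ a, g a ≠ a := fun a h => hnoloop a (by rw [← hsg, h])
  have ht : t (f (f α)) = s α := by rw [← hsf, hf3]
  have hvan₁ := fun β => (hvan β).1
  constructor
  · by_cases hβ : s β = s α
    · rcases eq_or_eq_of_source_eq hout hfg hsf hsg hf3 hβ with rfl | rfl
      · exact cycle_mul_self_eq_zero hg hf3 hrel hvan₁ _
      · rw [← f_g_symm_eq hout hfg hsf hsg hf3]
        exact cycle_mul_f_g_symm_eq_zero hg hrel hvan₁ α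
    · rw [mul_assoc, mul_eq_zero_of_target_ne horth hes het (ht.trans_ne (Ne.symm hβ)), mul_zero]
  · by_cases hβ : t β = s α
    · rcases eq_or_eq_of_target_eq hin hfg hsf hsg hf3 hβ with rfl | rfl
      · exact f_f_mul_cycle_eq_zero hg hf3 hrel (fun β => (hvan β).2) α
      · exact g_symm_mul_cycle_eq_zero hvan₁ α
    · rw [← mul_assoc, ← mul_assoc, mul_eq_zero_of_target_ne horth hes het hβ, zero_mul, zero_mul]

theorem stmt_17
  {Q₀ Q₁ : Type} [Fintype Q₀] [Fintype Q₁] [DecidableEq Q₀] [DecidableEq Q₁]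
  [Nonempty Q₀] [Nonempty Q₁]
  (s t : Q₁ → Q₀)
  (hconn : ∀ u v : Q₀, Relation.EqvGen (fun a b => ∃ e : Q₁, s e = a ∧ t e = b) u v)
  (hnoloop : ∀ e : Q₁, s e ≠ t e)
  (hno2cyc : ∀ e e' : Q₁, ¬ (s e = t e' ∧ t e = s e'))
  (hout : ∀ v : Q₀, (Finset.univ.filter fun e => s e = v).card = 2)
  (hin : ∀ v : Q₀, (Finset.univ.filter fun e => t e = v).card = 2)
  (f g : Q₁ ≃ Q₁)
  (hfg : ∀ α : Q₁, f α ≠ g α)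
  (hsf : ∀ α : Q₁, s (f α) = t α)
  (hsg : ∀ α : Q₁, s (g α) = t α)
  (hf3 : ∀ α : Q₁, f (f (f α)) = α)
  (bar : Q₁ → Q₁)
  (hbar_ne : ∀ α : Q₁, bar α ≠ α)
  (hbar_s : ∀ α : Q₁, s (bar α) = s α)
  {K : Type} [Field K] {A : Type} [Ring A] [Algebra K A]
  (c : Q₁ → K) (hc0 : ∀ α : Q₁, c α ≠ 0) (hcg : ∀ α : Q₁, c (g α) = c α)
  (x : Q₁ → A)
  (hrel : ∀ α : Q₁, x (f α) * x (f (f α)) =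
      c α • gpath x (⇑g) (g α) (Function.minimalPeriod (⇑g) α - 1))
  (e : Q₀ → A)
  (hidem : ∀ v : Q₀, e v * e v = e v)
  (horth : ∀ v w : Q₀, v ≠ w → e v * e w = 0)
  (hsum : ∑ v : Q₀, e v = 1)
  (hes : ∀ α : Q₁, e (s α) * x α = x α)
  (het : ∀ α : Q₁, x α * e (t α) = x α)
  (hvan : ∀ β : Q₁, x β * x (g β) * x (f (g β)) = 0 ∧ x β * x (f β) * x (g (f β)) = 0) :
    ∀ i : Q₀, ∀ α : Q₁, s α = i → ∀ β : Q₁,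
      (x α * x (f α) * x (f (f α))) * x β = 0 ∧
      x β * (x α * x (f α) * x (f (f α))) = 0 :=
  stmt_17_general s t hnoloop hout hin f g hfg hsf hsg hf3 c x hrel e horth hes het hvan
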